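/- Let s, γ ∈ ℕ with γ ≥ 1, x_o > 0 and δ > 0, and define S_o(x) := e^{-x} and S₁(x) := S_o(x) + δ h^{γ+s-1/2} ψ_{γ-1,h,x_o}(x) (the survival functions of f_o and f₁). Then there exist h₀ > 0 and κ > 0 (depending only on ψ, γ and x_o) such that for all h ∈ (0, min(h₀, x_o/2)): (S₁(x_o) − S_o(x_o))² ≥ κ δ² h^{2s+1} and (f₁(x_o) − f_o(x_o))² ≥ κ δ² h^{2s-1}. -/

import Mathlib

open MeasureTheory Real Set

noncomputable section

/-- The operator `S[φ](x) = -x φ'(x)`. -/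
def Sop (φ : ℝ → ℝ) : ℝ → ℝ := fun x => -x * deriv φ x

lemma aux_pow (i : ℕ) (x : ℝ) : x * ((i:ℝ) * x^(i-1)) = (i:ℝ) * x^i := by
  cases i with
  | zero => simp
  | succ k => push_cast; ring

lemma sum_shift {j : ℕ} (P Q : ℕ → ℝ) (hP0 : P 0 = 0) (hPj : P (j+1) = 0) :
    ∑ i ∈ Finset.range (j+1), (P i + Q i)
      = ∑ i ∈ Finset.range (j+2), (if i = 0 then 0 else P i + Q (i-1)) := by
  rw [Finset.sum_range_succ' (fun i => if i = 0 then 0 else P i + Q (i-1)) (j+1)]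
  simp only [Nat.succ_ne_zero, if_neg, Nat.add_sub_cancel, if_pos rfl, add_zero,
    reduceIte]
  rw [Finset.sum_add_distrib, Finset.sum_add_distrib]
  congr 1
  have e1 := Finset.sum_range_succ P (j+1)
  have e2 := Finset.sum_range_succ' P (j+1)
  rw [hPj] at e1
  rw [hP0] at e2
  simp only [add_zero] at e1 e2
  rw [← e1, e2]

lemma sop_iterate (ψ : ℝ → ℝ) (hψ : ContDiff ℝ (⊤ : ℕ∞) ψ) (xo : ℝ) (j : ℕ) :
    ∃ a : ℕ → ℝ, a j = (-1:ℝ)^j ∧ (∀ i, j < i → a i = 0) ∧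
      ∀ h : ℝ, ∀ x, Sop^[j] (fun z => ψ ((z - xo)/h)) x
        = ∑ i ∈ Finset.range (j+1),
            a i * (h⁻¹)^i * (x^i * iteratedDeriv i ψ ((x - xo)/h)) := by
  have hg : ∀ i : ℕ, ContDiff ℝ ((⊤ : ℕ∞) : WithTop ℕ∞) (iteratedDeriv i ψ) := by
    intro i; rw [iteratedDeriv_eq_iterate]; exact (hψ.of_le (by simp)).iterate_deriv i
  induction j with
  | zero =>
      refine ⟨fun i => if i = 0 then 1 else 0, by simp, ?_, ?_⟩
      · intro i hi; simp [Nat.pos_iff_ne_zero.mp hi]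
      · intro h x; simp
  | succ j ih =>
      obtain ⟨a, haj, ha0, hsum⟩ := ih
      refine ⟨fun i => if i = 0 then 0 else -(i:ℝ) * a i - a (i-1), ?_, ?_, ?_⟩
      · simp only [Nat.succ_ne_zero, if_neg, Nat.add_sub_cancel, reduceIte]
        rw [ha0 (j+1) (by omega), haj]; ring
      · intro i hi
        have h1 : a i = 0 := ha0 i (by omega)
        have h2 : a (i-1) = 0 := ha0 (i-1) (by omega)
        simp [h1, h2, (by omega : i ≠ 0)]
      · intro h x
        rw [Function.iterate_succ_apply']
        have hterm : ∀ i : ℕ, ∀ y : ℝ, HasDerivAt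
            (fun x => a i * (h⁻¹)^i * (x^i * iteratedDeriv i ψ ((x - xo)/h)))
            (a i * (h⁻¹)^i * ((i:ℝ) * y^(i-1) * iteratedDeriv i ψ ((y - xo)/h)
              + y^i * (iteratedDeriv (i+1) ψ ((y - xo)/h) * (1/h)))) y := by
          intro i y
          have hin : HasDerivAt (fun x : ℝ => (x - xo)/h) (1/h) y := by
            simpa using ((hasDerivAt_id y).sub_const xo).div_const h
          have hcomp : HasDerivAt (fun x => iteratedDeriv i ψ ((x - xo)/h))
              (iteratedDeriv (i+1) ψ ((y - xo)/h) * (1/h)) y := by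
            have := (((hg i).differentiable (by simp) ((y - xo)/h)).hasDerivAt).comp y hin
            simpa [iteratedDeriv_succ, Function.comp_def] using this
          exact ((hasDerivAt_pow i y).mul hcomp).const_mul _
        have hd : deriv (Sop^[j] (fun z => ψ ((z - xo)/h))) x
            = ∑ i ∈ Finset.range (j+1),
              a i * (h⁻¹)^i * ((i:ℝ) * x^(i-1) * iteratedDeriv i ψ ((x - xo)/h)
                + x^i * (iteratedDeriv (i+1) ψ ((x - xo)/h) * (1/h))) := by
          have hF : Sop^[j] (fun z => ψ ((z - xo)/h))
              = fun x => ∑ i ∈ Finset.range (j+1),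
                a i * (h⁻¹)^i * (x^i * iteratedDeriv i ψ ((x - xo)/h)) := funext (hsum h)
          rw [hF]
          exact (HasDerivAt.fun_sum (fun i _ => hterm i x)).deriv
        show -x * deriv _ x = _
        rw [hd, Finset.mul_sum]
        have step1 : ∀ i ∈ Finset.range (j+1),
            -x * (a i * (h⁻¹)^i * ((i:ℝ) * x^(i-1) * iteratedDeriv i ψ ((x - xo)/h)
              + x^i * (iteratedDeriv (i+1) ψ ((x - xo)/h) * (1/h))))
            = ((-(i:ℝ) * a i) * (h⁻¹)^i * (x^i * iteratedDeriv i ψ ((x - xo)/h))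
              + (-(a i)) * (h⁻¹)^(i+1) * (x^(i+1) * iteratedDeriv (i+1) ψ ((x - xo)/h))) := by
          intro i _
          have hp := aux_pow i x
          linear_combination (-(a i) * (h⁻¹)^i * iteratedDeriv i ψ ((x - xo)/h)) * hp
        rw [Finset.sum_congr rfl step1]
        rw [sum_shift
          (fun i => (-(i:ℝ) * a i) * (h⁻¹)^i * (x^i * iteratedDeriv i ψ ((x - xo)/h)))
          (fun i => (-(a i)) * (h⁻¹)^(i+1) * (x^(i+1) * iteratedDeriv (i+1) ψ ((x - xo)/h)))
          (by simp) (by simp [ha0 (j+1) (by omega)])]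
        refine Finset.sum_congr rfl fun i _ => ?_
        cases i with
        | zero => simp
        | succ k =>
            simp only [Nat.succ_ne_zero, if_neg, Nat.add_sub_cancel, reduceIte]
            push_cast
            ring

lemma pow_inv_mul {h : ℝ} (hh : h ≠ 0) {i j : ℕ} (hij : i ≤ j) :
    (h⁻¹)^i * h^j = h^(j-i) := by
  rw [inv_pow, inv_mul_eq_iff_eq_mul₀ (pow_ne_zero i hh), ← pow_add]
  congr 1; omega

/-- The rescaled evaluation `h^j * Sop^[j][ψ((·-xo)/h)](xo)` as a polynomial in `h`,
together with the key facts. -/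
lemma key_poly (ψ : ℝ → ℝ) (hψ : ContDiff ℝ (⊤ : ℕ∞) ψ) (xo : ℝ) (hxo : 0 < xo) (j : ℕ)
    (hd : iteratedDeriv j ψ 0 ≠ 0) :
    ∃ (G : ℝ → ℝ) (ε : ℝ), 0 < ε ∧
      (∀ h : ℝ, h ≠ 0 →
        (Sop^[j] fun z => ψ ((z - xo)/h)) xo * h ^ j = G h) ∧
      (∀ h : ℝ, |h| < ε → |G 0| / 2 < |G h|) ∧ G 0 ≠ 0 := by
  obtain ⟨a, haj, ha0, hsum⟩ := sop_iterate ψ hψ xo j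
  set d : ℕ → ℝ := fun i => iteratedDeriv i ψ 0 with hdd
  set G : ℝ → ℝ := fun t => ∑ i ∈ Finset.range (j+1), a i * xo^i * d i * t^(j-i) with hGdef
  have hG0 : G 0 = a j * xo^j * d j := by
    rw [hGdef]
    simp only
    rw [Finset.sum_eq_single j]
    · simp
    · intro i hi hne
      have : j - i ≠ 0 := by have := Finset.mem_range.mp hi; omega
      simp [zero_pow this]
    · intro hj; exact absurd (Finset.self_mem_range_succ j) hj
  have hG0ne : G 0 ≠ 0 := by
    rw [hG0, haj]
    exact mul_ne_zero (mul_ne_zero (by positivity) (by positivity)) hd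
  have hGcont : Continuous G := by
    apply continuous_finset_sum
    intro i _
    exact continuous_const.mul (continuous_pow (j-i))
  have habs : Filter.Tendsto (fun t => |G t|) (nhds 0) (nhds |G 0|) :=
    (hGcont.tendsto 0).abs
  have hev : ∀ᶠ t in nhds (0:ℝ), |G 0| / 2 < |G t| := by
    have h0 : 0 < |G 0| := abs_pos.mpr hG0ne
    exact habs.eventually (lt_mem_nhds (by linarith))
  obtain ⟨ε, hε, hεp⟩ := Metric.eventually_nhds_iff.mp hev
  refine ⟨G, ε, hε, ?_, ?_, hG0ne⟩
  · intro h hh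
    rw [hsum h xo, Finset.sum_mul]
    refine Finset.sum_congr rfl fun i hi => ?_
    have hi' : i ≤ j := by have := Finset.mem_range.mp hi; omega
    simp only [sub_self, zero_div]
    linear_combination (a i * xo^i * d i) * pow_inv_mul hh hi'
  · intro h hhε
    exact hεp (by simpa [Real.dist_eq] using hhε)

/-- Separation of the hypotheses in the lower-bound construction: with
`S_o(x) = e^{-x}`, `S₁ = S_o + δ h^{γ+s-1/2} ψ_{γ-1,h,x_o}`,
`f_o(x) = e^{-x}` and `f₁ = f_o + δ h^{γ+s-1/2} ψ_{γ,h,x_o} x⁻¹`, there are `h₀, κ > 0`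
(depending only on `ψ`, `γ` and `x_o`) such that for all `h ∈ (0, min(h₀, x_o/2))`:
`(S₁(x_o) − S_o(x_o))² ≥ κ δ² h^{2s+1}` and `(f₁(x_o) − f_o(x_o))² ≥ κ δ² h^{2s-1}`. -/
theorem lower_bound_construction_separation
    (s γ : ℕ) (hγ : 1 ≤ γ) (xo δ : ℝ) (hxo : 0 < xo) (hδ : 0 < δ)
    (ψ : ℝ → ℝ) (hψsmooth : ContDiff ℝ (⊤ : ℕ∞) ψ)
    (hψsupp : Function.support ψ ⊆ Set.Icc (-1 : ℝ) 1)
    (hψint : (∫ x : ℝ, ψ x) = 0)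
    (hψd1 : iteratedDeriv (γ - 1) ψ 0 ≠ 0)
    (hψd2 : iteratedDeriv γ ψ 0 ≠ 0)
    (So S1 fo f1 : ℝ → ℝ → ℝ)
    (hSo : So = fun _ x => Real.exp (-x))
    (hS1 : S1 = fun h x => Real.exp (-x) +
      δ * h ^ ((γ : ℝ) + (s : ℝ) - 1 / 2) * (Sop^[γ - 1] fun z => ψ ((z - xo) / h)) x)
    (hfo : fo = fun _ x => Real.exp (-x))
    (hf1 : f1 = fun h x => Real.exp (-x) +
      δ * h ^ ((γ : ℝ) + (s : ℝ) - 1 / 2) * (Sop^[γ] fun z => ψ ((z - xo) / h)) x / x) :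
    ∃ h₀ κ : ℝ, 0 < h₀ ∧ 0 < κ ∧
      ∀ h : ℝ, 0 < h → h < min h₀ (xo / 2) →
        κ * δ ^ 2 * h ^ (2 * (s : ℝ) + 1) ≤ (S1 h xo - So h xo) ^ 2 ∧
        κ * δ ^ 2 * h ^ (2 * (s : ℝ) - 1) ≤ (f1 h xo - fo h xo) ^ 2 := by
  obtain ⟨G1, ε1, hε1, hkey1, hlb1, hG10⟩ := key_poly ψ hψsmooth xo hxo (γ-1) hψd1
  obtain ⟨G2, ε2, hε2, hkey2, hlb2, hG20⟩ := key_poly ψ hψsmooth xo hxo γ hψd2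
  have hc1 : 0 < |G1 0| := abs_pos.mpr hG10
  have hc2 : 0 < |G2 0| := abs_pos.mpr hG20
  refine ⟨min ε1 ε2, min ((|G1 0|/2)^2) ((|G2 0|/2)^2 / xo^2),
    lt_min hε1 hε2, lt_min (by positivity) (by positivity), ?_⟩
  intro h hpos hlt
  have hh : h ≠ 0 := ne_of_gt hpos
  have habs : |h| = h := abs_of_pos hpos
  have hhε1 : |h| < ε1 := by
    rw [habs]; exact lt_of_lt_of_le (lt_of_lt_of_le hlt (min_le_left _ _)) (min_le_left _ _)
  have hhε2 : |h| < ε2 := by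
    rw [habs]; exact lt_of_lt_of_le (lt_of_lt_of_le hlt (min_le_left _ _)) (min_le_right _ _)
  have hb1 := hlb1 h hhε1
  have hb2 := hlb2 h hhε2
  set e : ℝ := (γ : ℝ) + (s : ℝ) - 1/2 with hedef
  -- exponent arithmetic
  have hpow : ∀ j : ℕ, (h ^ e)^2 / ((h:ℝ)^j)^2 = h ^ (2*e - 2*(j:ℝ)) := by
    intro j
    rw [div_eq_mul_inv, ← Real.rpow_natCast h j,
      ← Real.rpow_natCast (h ^ e) 2, ← Real.rpow_natCast (h ^ ((j:ℝ))) 2,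
      ← Real.rpow_mul hpos.le, ← Real.rpow_mul hpos.le,
      ← Real.rpow_neg hpos.le, ← Real.rpow_add hpos]
    congr 1
    push_cast
    ring
  have hexp1 : (h ^ e)^2 / (h^(γ-1:ℕ))^2 = h ^ (2*(s:ℝ)+1) := by
    rw [hpow (γ-1)]
    congr 1
    rw [Nat.cast_sub hγ]
    push_cast
    ring
  have hexp2 : (h ^ e)^2 / ((h:ℝ)^γ)^2 = h ^ (2*(s:ℝ)-1) := by
    rw [hpow γ]
    congr 1
    push_cast
    ring
  have hV1 : (Sop^[γ-1] fun z => ψ ((z - xo)/h)) xo = G1 h / h^(γ-1:ℕ) := by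
    rw [eq_div_iff (pow_ne_zero _ hh)]
    exact hkey1 h hh
  have hV2 : (Sop^[γ] fun z => ψ ((z - xo)/h)) xo = G2 h / h^γ := by
    rw [eq_div_iff (pow_ne_zero _ hh)]
    exact hkey2 h hh
  constructor
  · -- survival functions
    have heq1 : (S1 h xo - So h xo)^2 = δ^2 * (G1 h)^2 * h ^ (2*(s:ℝ)+1) := by
      have h1 : S1 h xo - So h xo = δ * h ^ e * (G1 h / h^(γ-1:ℕ)) := by
        simp only [hS1, hSo, ← hedef, hV1]
        ring
      rw [h1, show (δ * h ^ e * (G1 h / h^(γ-1:ℕ)))^2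
          = δ^2 * (G1 h)^2 * ((h ^ e)^2 / (h^(γ-1:ℕ))^2) by ring, hexp1]
    calc min ((|G1 0|/2)^2) ((|G2 0|/2)^2 / xo^2) * δ^2 * h ^ (2*(s:ℝ)+1)
        = min ((|G1 0|/2)^2) ((|G2 0|/2)^2 / xo^2) * (δ^2 * h ^ (2*(s:ℝ)+1)) := by ring
      _ ≤ (G1 h)^2 * (δ^2 * h ^ (2*(s:ℝ)+1)) := by
          apply mul_le_mul_of_nonneg_right _ (by positivity)
          refine le_trans (min_le_left _ _) ?_
          rw [← sq_abs (G1 h)]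
          exact pow_le_pow_left₀ (by positivity) hb1.le 2
      _ = δ^2 * (G1 h)^2 * h ^ (2*(s:ℝ)+1) := by ring
      _ = (S1 h xo - So h xo)^2 := heq1.symm
  · -- densities
    have heq2 : (f1 h xo - fo h xo)^2 = δ^2 * ((G2 h)^2 / xo^2) * h ^ (2*(s:ℝ)-1) := by
      have h1 : f1 h xo - fo h xo = δ * h ^ e * (G2 h / h^γ) / xo := by
        simp only [hf1, hfo, ← hedef, hV2]
        ring
      rw [h1, show (δ * h ^ e * (G2 h / h^γ) / xo)^2
          = δ^2 * ((G2 h)^2 / xo^2) * ((h ^ e)^2 / ((h:ℝ)^γ)^2) by ring, hexp2]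
    calc min ((|G1 0|/2)^2) ((|G2 0|/2)^2 / xo^2) * δ^2 * h ^ (2*(s:ℝ)-1)
        = min ((|G1 0|/2)^2) ((|G2 0|/2)^2 / xo^2) * (δ^2 * h ^ (2*(s:ℝ)-1)) := by ring
      _ ≤ (G2 h)^2 / xo^2 * (δ^2 * h ^ (2*(s:ℝ)-1)) := by
          apply mul_le_mul_of_nonneg_right _ (by positivity)
          refine le_trans (min_le_right _ _) ?_
          apply div_le_div_of_nonneg_right ?_ (by positivity)
          rw [← sq_abs (G2 h)]
          exact pow_le_pow_left₀ (by positivity) hb2.le 2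
      _ = δ^2 * ((G2 h)^2 / xo^2) * h ^ (2*(s:ℝ)-1) := by ring
      _ = (f1 h xo - fo h xo)^2 := heq2.symm
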